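/- arXiv:1210.0109 — 3 statements merged into one kernel-verified Lean document; each statement's English description precedes it below -/
import Mathlib

section
/- Let $\varphi : \mathcal{S}^1 \to \mathbb{R}$ be a function of bounded variation with $\varphi \ge 0$, $\int_0^1 \varphi\,dx = 1$, and total variation $\bigvee_0^1 \varphi \le a^*$. Let $\{J_i\}$ be a finite partition of $\mathcal{S}^1$ into intervals, each of length less than $1/(2a^*)$. Then there exists a partition element $J$ such that $\varphi(z) \ge 1/2$ for all $z \in J$. -/
/-!
If `φ < 1/2` somewhere on every piece `J` of the partition, then on `J` it is below
`1/2 + ⋁_J φ`, so `∫_J φ < |J|/2 + |J| ⋁_J φ ≤ |J|/2 + ⋁_J φ / (2 a*)`.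
Summing over the pieces, using additivity of the variation, gives
`1 = ∫ φ < 1/2 + a*/(2 a*) = 1`.
-/

open MeasureTheory Set Finset

section

variable {φ : ℝ → ℝ} {a b : ℝ}

theorem setIntegral_Icc_le_mul_add_eVariationOn (hφ : IntegrableOn φ (Icc a b))
    (hbv : BoundedVariationOn φ (Icc a b)) {z : ℝ} (hz : z ∈ Icc a b) :
    ∫ x in Icc a b, φ x ≤ (b - a) * (φ z + (eVariationOn φ (Icc a b)).toReal) := by
  have hab : a ≤ b := hz.1.trans hz.2
  have hle : ∀ x ∈ Icc a b, φ x ≤ φ z + (eVariationOn φ (Icc a b)).toReal := fun x hx => by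
    linarith [hbv.sub_le hx hz]
  calc ∫ x in Icc a b, φ x
      ≤ ∫ _ in Icc a b, (φ z + (eVariationOn φ (Icc a b)).toReal) :=
        setIntegral_mono_on hφ (integrableOn_const measure_Icc_lt_top.ne) measurableSet_Icc hle
    _ = (b - a) * (φ z + (eVariationOn φ (Icc a b)).toReal) := by
        rw [setIntegral_const, Real.volume_real_Icc_of_le hab, smul_eq_mul]

theorem setIntegral_Icc_lt_of_lt {c δ z : ℝ} (hab : a < b) (hδ : b - a ≤ δ)
    (hφ : IntegrableOn φ (Icc a b)) (hbv : BoundedVariationOn φ (Icc a b))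
    (hz : z ∈ Icc a b) (hc : φ z < c) :
    ∫ x in Icc a b, φ x < (b - a) * c + δ * (eVariationOn φ (Icc a b)).toReal := by
  have hzc := mul_lt_mul_of_pos_left hc (sub_pos.2 hab)
  have hvar :=
    mul_le_mul_of_nonneg_right hδ (ENNReal.toReal_nonneg (a := eVariationOn φ (Icc a b)))
  linarith [setIntegral_Icc_le_mul_add_eVariationOn hφ hbv hz]

end

section

variable {t : ℕ → ℝ} {m : ℕ}

theorem Icc_subset_Icc_of_monotoneOn (ht : MonotoneOn t (Set.Iic m)) {i : ℕ} (hi : i < m) :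
    Icc (t i) (t (i + 1)) ⊆ Icc (t 0) (t m) :=
  Icc_subset_Icc (ht (by simp) (by simp; omega) (Nat.zero_le i))
    (ht (by simp; omega) (by simp) hi)

theorem eVariationOn_sum_Icc_of_monotoneOn {E : Type*} [PseudoEMetricSpace E] (f : ℝ → E)
    (ht : MonotoneOn t (Set.Iic m)) :
    ∑ i ∈ range m, eVariationOn f (Icc (t i) (t (i + 1))) =
      eVariationOn f (Icc (t 0) (t m)) := by
  induction m with
  | zero => simp [eVariationOn.subsingleton]
  | succ n ih =>
    rw [sum_range_succ, ih (ht.mono (Set.Iic_subset_Iic.2 n.le_succ))]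
    simpa only [univ_inter] using eVariationOn.Icc_add_Icc (s := univ) f
      (ht (by simp) (by simp) (Nat.zero_le n)) (ht (by simp) (by simp) n.le_succ)
      (mem_univ _)

theorem sum_setIntegral_Icc_of_monotoneOn {φ : ℝ → ℝ} (ht : MonotoneOn t (Set.Iic m))
    (hφ : IntegrableOn φ (Icc (t 0) (t m))) :
    ∑ i ∈ range m, ∫ x in Icc (t i) (t (i + 1)), φ x = ∫ x in Icc (t 0) (t m), φ x := by
  have hle : ∀ {i j}, i ≤ j → j ≤ m → t i ≤ t j := fun hij hj =>
    ht (by simp; omega) (by simpa using hj) hij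
  have hint : ∀ i < m, IntervalIntegrable φ volume (t i) (t (i + 1)) := fun i hi =>
    (intervalIntegrable_iff_integrableOn_Icc_of_le (hle i.le_succ hi)).2
      (hφ.mono_set (Icc_subset_Icc_of_monotoneOn ht hi))
  simp_rw [integral_Icc_eq_integral_Ioc]
  rw [← intervalIntegral.integral_of_le (hle (Nat.zero_le m) le_rfl),
    ← intervalIntegral.sum_integral_adjacent_intervals hint]
  refine sum_congr rfl fun i hi => ?_
  rw [intervalIntegral.integral_of_le (hle i.le_succ (mem_range.1 hi))]

end

theorem bv_density_large_on_partition_element_general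
    (φ : ℝ → ℝ) (aStar : ℝ) (haStar : 0 < aStar)
    (hφint : IntegrableOn φ (Set.Icc (0 : ℝ) 1) volume)
    (hφ1 : ∫ x in Set.Icc (0 : ℝ) 1, φ x = 1)
    (hφvar : eVariationOn φ (Set.Icc (0 : ℝ) 1) ≤ ENNReal.ofReal aStar)
    (m : ℕ) (hm : 0 < m) (t : ℕ → ℝ)
    (ht0 : t 0 = 0) (htm : t m = 1)
    (htmono : ∀ i < m, t i < t (i + 1))
    (htlen : ∀ i < m, t (i + 1) - t i < 1 / (2 * aStar)) :
    ∃ i < m, ∀ z ∈ Set.Icc (t i) (t (i + 1)), 1 / 2 ≤ φ z := by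
  have ht : MonotoneOn t (Set.Iic m) := (strictMonoOn_Iic_of_lt_succ htmono).monotoneOn
  rw [← ht0, ← htm] at hφint hφvar
  have hbv : BoundedVariationOn φ (Icc (t 0) (t m)) :=
    ne_top_of_le_ne_top ENNReal.ofReal_ne_top hφvar
  set V : ℕ → ℝ := fun i => (eVariationOn φ (Icc (t i) (t (i + 1)))).toReal
  have hV : ∑ i ∈ range m, V i ≤ aStar := by
    rw [← ENNReal.toReal_sum fun i hi =>
        hbv.mono (Icc_subset_Icc_of_monotoneOn ht (mem_range.1 hi)),
      eVariationOn_sum_Icc_of_monotoneOn φ ht]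
    exact ENNReal.toReal_le_of_le_ofReal haStar.le hφvar
  by_contra! hsmall
  choose z hz hzφ using hsmall
  have hterm : ∀ i ∈ range m, ∫ x in Icc (t i) (t (i + 1)), φ x
      < (t (i + 1) - t i) * (1 / 2) + 1 / (2 * aStar) * V i := fun i hi =>
    have hi := mem_range.1 hi
    setIntegral_Icc_lt_of_lt (htmono i hi) (htlen i hi).le
      (hφint.mono_set (Icc_subset_Icc_of_monotoneOn ht hi))
      (hbv.mono (Icc_subset_Icc_of_monotoneOn ht hi)) (hz i hi) (hzφ i hi)
  refine lt_irrefl (1 : ℝ) ?_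
  calc 1 = ∑ i ∈ range m, ∫ x in Icc (t i) (t (i + 1)), φ x := by
        rw [sum_setIntegral_Icc_of_monotoneOn ht hφint, ht0, htm, hφ1]
    _ < ∑ i ∈ range m, ((t (i + 1) - t i) * (1 / 2) + 1 / (2 * aStar) * V i) :=
        sum_lt_sum_of_nonempty (nonempty_range_iff.2 hm.ne') hterm
    _ = 1 / 2 + 1 / (2 * aStar) * ∑ i ∈ range m, V i := by
        rw [sum_add_distrib, ← sum_mul, ← mul_sum, sum_range_sub, ht0, htm]; ring
    _ ≤ 1 / 2 + 1 / (2 * aStar) * aStar := by gcongr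
    _ = 1 := by field_simp; ring

/-- A BV probability density on the circle (modeled as `[0,1]` with
endpoints identified) with total variation at most `a*` is at least `1/2` on some
element of any interval partition with mesh `< 1/(2 a*)`. -/
theorem bv_density_large_on_partition_element
    (φ : ℝ → ℝ) (aStar : ℝ) (haStar : 0 < aStar)
    (hφnonneg : ∀ x ∈ Set.Icc (0 : ℝ) 1, 0 ≤ φ x)
    (hφint : IntegrableOn φ (Set.Icc (0 : ℝ) 1) volume)
    (hφ1 : ∫ x in Set.Icc (0 : ℝ) 1, φ x = 1)
    (hφvar : eVariationOn φ (Set.Icc (0 : ℝ) 1) ≤ ENNReal.ofReal aStar)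
    (m : ℕ) (hm : 0 < m) (t : ℕ → ℝ)
    (ht0 : t 0 = 0) (htm : t m = 1)
    (htmono : ∀ i < m, t i < t (i + 1))
    (htlen : ∀ i < m, t (i + 1) - t i < 1 / (2 * aStar)) :
    ∃ i < m, ∀ z ∈ Set.Icc (t i) (t (i + 1)), 1 / 2 ≤ φ z :=
  bv_density_large_on_partition_element_general φ aStar haStar hφint hφ1 hφvar m hm t ht0 htm htmono
    htlen
end

section
/- Let $f : \mathcal{S}^1 \to \mathcal{S}^1$ be piecewise $C^2$ expanding with respect to a finite interval partition $\mathcal{A}_1$, with $\inf |f'| > 2$ on each partition element. Let $J \subset \mathcal{S}^1$ be a nondegenerate interval. Then there exists $s \in \mathbb{Z}^+$ and a subinterval $J_s \subset J$ such that $f^s|J_s$ is $C^2$ (i.e. $J_s, f(J_s), \dots, f^{s-1}(J_s)$ each lie inside a single element of $\mathcal{A}_1$) and $f^s(J_s) \supset I$ for some $I \in \mathcal{A}_1$. -/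
/-!
Follow a subinterval `[a, b)` of `J` along its orbit for as long as its images stay inside single
partition elements. Then `f^[s]` agrees on `[a, b)` with a continuous injective map `ψ`, and one
more application of the expanding lift `g i` stretches the image `ψ '' [a, b]` by the factor `λ`.
The stretched interval either contains an integer translate of a whole partition element, which
`f^[s+1] = Int.fract ∘ g i ∘ ψ` then covers, or at least half of it lies in a single translate.
In the second case a slightly shorter window in that half pulls back to a subinterval whose image
is longer by the factor `(λ + 2) / 4 > 1`. Images have length less than `1`, so the second case
cannot recur forever.
-/

open Set

section IntervalMaps

variable {α δ : Type*} [ConditionallyCompleteLinearOrder α] [TopologicalSpace α] [OrderTopology α]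
  [DenselyOrdered α] [LinearOrder δ] [TopologicalSpace δ] [OrderClosedTopology δ] {φ : α → δ}

theorem ContinuousOn.image_uIcc_subset_of_injOn {a b : α} (hc : ContinuousOn φ (uIcc a b))
    (hi : InjOn φ (uIcc a b)) : φ '' uIcc a b ⊆ uIcc (φ a) (φ b) := by
  rcases hc.strictMonoOn_of_injOn_Icc' inf_le_sup hi with h | h
  · exact h.monotoneOn.image_uIcc_subset
  · exact h.antitoneOn.image_uIcc_subset

theorem uIoo_subset_image_Ico {a b : α} (hab : a ≤ b) (hc : ContinuousOn φ (Icc a b)) :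
    uIoo (φ a) (φ b) ⊆ φ '' Ico a b := by
  rcases le_total (φ a) (φ b) with h | h
  · rw [uIoo_of_le h]
    exact Ioo_subset_Ico_self.trans (intermediate_value_Ico hab hc)
  · rw [uIoo_of_ge h]
    exact Ioo_subset_Ioc_self.trans (intermediate_value_Ico' hab hc)

end IntervalMaps

theorem mul_abs_sub_le_abs_sub_of_le_abs_derivWithin {G : ℝ → ℝ} {A B lam : ℝ}
    (hG : DifferentiableOn ℝ G (Icc A B))
    (hder : ∀ x ∈ Icc A B, lam ≤ |derivWithin G (Icc A B) x|) {x y : ℝ}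
    (hx : x ∈ Icc A B) (hy : y ∈ Icc A B) : lam * |y - x| ≤ |G y - G x| := by
  wlog hxy : x < y generalizing x y
  · rcases (not_lt.1 hxy).eq_or_lt with rfl | hyx
    · simp
    · simpa only [abs_sub_comm] using this hy hx hyx
  have hIcc {z : ℝ} (hz : z ∈ Ioo x y) : Icc A B ∈ nhds z :=
    Icc_mem_nhds (hx.1.trans_lt hz.1) (hz.2.trans_le hy.2)
  obtain ⟨z, hz, hslope⟩ := exists_deriv_eq_slope G hxy
    (hG.continuousOn.mono (Icc_subset_Icc hx.1 hy.2))
    fun w hw =>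
      ((hG w (mem_of_mem_nhds (hIcc hw))).differentiableAt (hIcc hw)).differentiableWithinAt
  have hz' := hder z (mem_of_mem_nhds (hIcc hz))
  rwa [derivWithin_of_mem_nhds (hIcc hz), hslope, abs_div, abs_of_pos (sub_pos.2 hxy),
    le_div_iff₀ (sub_pos.2 hxy), ← abs_of_pos (sub_pos.2 hxy)] at hz'

namespace PiecewiseExpanding

variable {f : ℝ → ℝ} {c : ℕ → ℝ} {m : ℕ} {J : Set ℝ} {lam : ℝ} {g : ℕ → ℝ → ℝ}

structure IsIntervalPartition (c : ℕ → ℝ) (m : ℕ) : Prop where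
  zero : c 0 = 0
  last : c m = 1
  lt_succ : ∀ i < m, c i < c (i + 1)

namespace IsIntervalPartition

theorem strictMonoOn (hc : IsIntervalPartition c m) : StrictMonoOn c (Iic m) :=
  strictMonoOn_Iic_of_lt_succ fun i hi => by simpa using hc.lt_succ i hi

theorem Ico_subset_Ico_zero_one (hc : IsIntervalPartition c m) {j : ℕ} (hj : j < m) :
    Ico (c j) (c (j + 1)) ⊆ Ico 0 1 := by
  refine Ico_subset_Ico ?_ ?_
  · exact hc.zero ▸ hc.strictMonoOn.monotoneOn (mem_Iic.2 (Nat.zero_le m)) (mem_Iic.2 hj.le)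
      (Nat.zero_le j)
  · exact hc.last ▸ hc.strictMonoOn.monotoneOn (mem_Iic.2 hj) (mem_Iic.2 le_rfl) hj

theorem exists_mem_Ico (hc : IsIntervalPartition c m) {x : ℝ} (hx : x ∈ Ico 0 1) :
    ∃ j < m, x ∈ Ico (c j) (c (j + 1)) := by
  classical
  have hex : ∃ n, x < c n := ⟨m, hc.last ▸ hx.2⟩
  obtain ⟨j, hj⟩ : ∃ j, Nat.find hex = j + 1 := Nat.exists_eq_succ_of_ne_zero fun h => by
    have := Nat.find_spec hex
    rw [h, hc.zero] at this
    exact not_lt.2 hx.1 this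
  have hle := Nat.find_min' hex (hc.last ▸ hx.2 : x < c m)
  exact ⟨j, by omega, not_lt.1 (Nat.find_min hex (by omega)), hj ▸ Nat.find_spec hex⟩

end IsIntervalPartition

def cell (c : ℕ → ℝ) (N : ℤ) (j : ℕ) : Set ℝ := Ico (N + c j) (N + c (j + 1))

theorem exists_mem_cell (hc : IsIntervalPartition c m) (x : ℝ) :
    ∃ N : ℤ, ∃ j < m, x ∈ cell c N j := by
  obtain ⟨j, hj, hx⟩ := hc.exists_mem_Ico ⟨Int.fract_nonneg x, Int.fract_lt_one x⟩
  have := Int.floor_add_fract x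
  exact ⟨⌊x⌋, j, hj, by linarith [hx.1], by linarith [hx.2]⟩

theorem exists_cell_start_eq_end (hc : IsIntervalPartition c m) (N : ℤ) {j : ℕ} (hj : j < m) :
    ∃ N' : ℤ, ∃ j' < m, (N' : ℝ) + c j' = N + c (j + 1) := by
  rcases (show j + 1 ≤ m from hj).lt_or_eq with h | h
  · exact ⟨N, j + 1, h, rfl⟩
  · exact ⟨N + 1, 0, by omega, by rw [h, hc.zero, hc.last]; push_cast; ring⟩

theorem fract_eq_of_mem_cell (hc : IsIntervalPartition c m) {N : ℤ} {j : ℕ} (hj : j < m)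
    {x : ℝ} (hx : x ∈ cell c N j) : Int.fract x = x - N := by
  have h01 := hc.Ico_subset_Ico_zero_one hj (⟨by linarith [hx.1], by linarith [hx.2]⟩ :
    x - N ∈ Ico (c j) (c (j + 1)))
  exact Int.fract_eq_iff.2 ⟨h01.1, h01.2, N, by ring⟩

theorem exists_cell_subset_Ioo_or_Ico_subset_cell (hc : IsIntervalPartition c m) {p q : ℝ}
    (hpq : p < q) :
    (∃ N : ℤ, ∃ j < m, cell c N j ⊆ Ioo p q) ∨
      ∃ N : ℤ, ∃ j < m, ∃ w, Ico w (w + (q - p) / 2) ⊆ cell c N j ∩ Icc p q := by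
  obtain ⟨N, j, hj, hp⟩ := exists_mem_cell hc p
  obtain ⟨N', j', hj', hd⟩ := exists_cell_start_eq_end hc N hj
  have hd' := hc.lt_succ j' hj'
  simp only [cell, mem_Ico] at hp
  simp only [cell, subset_def, mem_inter_iff, mem_Ico, mem_Ioo, mem_Icc]
  by_cases hqd : q ≤ N + c (j + 1)
  · exact Or.inr ⟨N, j, hj, p, fun y hy => by refine ⟨⟨?_, ?_⟩, ?_, ?_⟩ <;> linarith⟩
  by_cases hqd' : N' + c (j' + 1) ≤ q
  · exact Or.inl ⟨N', j', hj', fun y hy => by constructor <;> linarith⟩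
  by_cases hhalf : (q - p) / 2 ≤ N + c (j + 1) - p
  · exact Or.inr ⟨N, j, hj, p, fun y hy => by refine ⟨⟨?_, ?_⟩, ?_, ?_⟩ <;> linarith⟩
  · exact Or.inr ⟨N', j', hj', N + c (j + 1),
      fun y hy => by refine ⟨⟨?_, ?_⟩, ?_, ?_⟩ <;> linarith⟩

structure IsExpandingLift (f : ℝ → ℝ) (c : ℕ → ℝ) (m : ℕ) (lam : ℝ) (g : ℕ → ℝ → ℝ) :
    Prop where
  continuousOn : ∀ i < m, ContinuousOn (g i) (Icc (c i) (c (i + 1)))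
  eq_fract : ∀ i < m, ∀ x ∈ Ico (c i) (c (i + 1)), f x = Int.fract (g i x)
  expanding : ∀ i < m, ∀ x ∈ Icc (c i) (c (i + 1)), ∀ y ∈ Icc (c i) (c (i + 1)),
    lam * |y - x| ≤ |g i y - g i x|

/-- The stage `J_s` of the construction. -/
structure Branch (f : ℝ → ℝ) (c : ℕ → ℝ) (m : ℕ) (J : Set ℝ) where
  s : ℕ
  a : ℝ
  b : ℝ
  lt : a < b
  Ico_subset : Ico a b ⊆ J
  itinerary : ∀ k < s, ∃ i < m, f^[k] '' Ico a b ⊆ Ico (c i) (c (i + 1))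
  ψ : ℝ → ℝ
  eqOn : EqOn f^[s] ψ (Ico a b)
  continuousOn : ContinuousOn ψ (Icc a b)
  injOn : InjOn ψ (Icc a b)
  i : ℕ
  i_lt : i < m
  mapsTo : MapsTo ψ (Icc a b) (Ico (c i) (c (i + 1)))

namespace Branch

variable (B : Branch f c m J)

def length : ℝ := |B.ψ B.b - B.ψ B.a|

theorem length_pos : 0 < B.length :=
  abs_pos.2 <| sub_ne_zero.2 fun h =>
    B.lt.ne' (B.injOn (right_mem_Icc.2 B.lt.le) (left_mem_Icc.2 B.lt.le) h)

theorem length_lt_one (hc : IsIntervalPartition c m) : B.length < 1 := by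
  have ha := hc.Ico_subset_Ico_zero_one B.i_lt (B.mapsTo (left_mem_Icc.2 B.lt.le))
  have hb := hc.Ico_subset_Ico_zero_one B.i_lt (B.mapsTo (right_mem_Icc.2 B.lt.le))
  rw [length, abs_sub_lt_iff]
  constructor <;> linarith [ha.1, ha.2, hb.1, hb.2]

theorem itinerary_succ : ∀ k < B.s + 1, ∃ i < m, f^[k] '' Ico B.a B.b ⊆ Ico (c i) (c (i + 1)) := by
  intro k hk
  rcases Nat.lt_succ_iff_lt_or_eq.1 hk with hk | rfl
  · exact B.itinerary k hk
  · refine ⟨B.i, B.i_lt, ?_⟩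
    rintro _ ⟨x, hx, rfl⟩
    rw [B.eqOn hx]
    exact B.mapsTo (Ico_subset_Icc_self hx)

def lift (g : ℕ → ℝ → ℝ) (x : ℝ) : ℝ := g B.i (B.ψ x)

theorem iterate_succ_eqOn (hg : IsExpandingLift f c m lam g) :
    EqOn f^[B.s + 1] (Int.fract ∘ B.lift g) (Ico B.a B.b) := by
  intro x hx
  rw [Function.iterate_succ_apply', B.eqOn hx, Function.comp_apply, lift,
    hg.eq_fract B.i B.i_lt _ (B.mapsTo (Ico_subset_Icc_self hx))]

theorem continuousOn_lift (hg : IsExpandingLift f c m lam g) :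
    ContinuousOn (B.lift g) (Icc B.a B.b) :=
  (hg.continuousOn B.i B.i_lt).comp B.continuousOn fun _ hx => Ico_subset_Icc_self (B.mapsTo hx)

theorem mul_abs_sub_le_abs_lift_sub (hg : IsExpandingLift f c m lam g) {x y : ℝ}
    (hx : x ∈ Icc B.a B.b) (hy : y ∈ Icc B.a B.b) :
    lam * |B.ψ y - B.ψ x| ≤ |B.lift g y - B.lift g x| :=
  hg.expanding B.i B.i_lt _ (Ico_subset_Icc_self (B.mapsTo hx)) _
    (Ico_subset_Icc_self (B.mapsTo hy))

theorem injOn_lift (hg : IsExpandingLift f c m lam g) (hlam : 0 < lam) :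
    InjOn (B.lift g) (Icc B.a B.b) := by
  intro x hx y hy h
  have hexp := B.mul_abs_sub_le_abs_lift_sub hg hx hy
  rw [h, sub_self, abs_zero] at hexp
  have : |B.ψ y - B.ψ x| ≤ 0 := by nlinarith [abs_nonneg (B.ψ y - B.ψ x)]
  exact (B.injOn hy hx (sub_eq_zero.1 (abs_nonpos_iff.1 this))).symm

theorem exists_next_of_image_uIcc_subset_cell (hc : IsIntervalPartition c m)
    (hg : IsExpandingLift f c m lam g) (hlam : 0 < lam) {t t' : ℝ} (ht : t ∈ Icc B.a B.b)
    (ht' : t' ∈ Icc B.a B.b) (htt' : t ≠ t') {N : ℤ} {j : ℕ} (hj : j < m)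
    (himage : B.lift g '' uIcc t t' ⊆ cell c N j) :
    ∃ B' : Branch f c m J, B'.length = |B.lift g t' - B.lift g t| := by
  have hsub : uIcc t t' ⊆ Icc B.a B.b := uIcc_subset_Icc ht ht'
  have hIco : Ico (t ⊓ t') (t ⊔ t') ⊆ Ico B.a B.b :=
    Ico_subset_Ico (le_inf ht.1 ht'.1) (sup_le ht.2 ht'.2)
  have hcell {x} (hx : x ∈ uIcc t t') : B.lift g x ∈ cell c N j := himage ⟨x, hx, rfl⟩
  refine ⟨⟨B.s + 1, t ⊓ t', t ⊔ t', inf_lt_sup.2 htt', hIco.trans B.Ico_subset,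
    fun k hk => ?_, fun x => B.lift g x - N, fun x hx => ?_,
    ((B.continuousOn_lift hg).mono hsub).sub continuousOn_const,
    fun x hx y hy h => B.injOn_lift hg hlam (hsub hx) (hsub hy) (sub_left_inj.1 h),
    j, hj, fun x hx => ?_⟩, ?_⟩
  · obtain ⟨i, hi, hk⟩ := B.itinerary_succ k hk
    exact ⟨i, hi, (image_mono hIco).trans hk⟩
  · rw [B.iterate_succ_eqOn hg (hIco hx), Function.comp_apply,
      fract_eq_of_mem_cell hc hj (hcell (Ico_subset_Icc_self hx))]
  · have := hcell hx
    exact ⟨by linarith [this.1], by linarith [this.2]⟩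
  · rcases le_total t t' with h | h <;> simp [length, h, abs_sub_comm]

theorem exists_next_of_Icc_subset_cell (hc : IsIntervalPartition c m)
    (hg : IsExpandingLift f c m lam g) (hlam : 0 < lam) {N : ℤ} {j : ℕ} (hj : j < m) {w r : ℝ}
    (hr : 0 < r) (hwin : Icc w (w + r) ⊆ cell c N j ∩ uIcc (B.lift g B.a) (B.lift g B.b)) :
    ∃ B' : Branch f c m J, B'.length = r := by
  set φ := B.lift g
  have hpre : uIcc (φ B.a) (φ B.b) ⊆ φ '' Icc B.a B.b := by
    have := intermediate_value_uIcc (f := φ) (a := B.a) (b := B.b)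
      (by rw [uIcc_of_le B.lt.le]; exact B.continuousOn_lift hg)
    rwa [uIcc_of_le B.lt.le] at this
  obtain ⟨t, ht, hφt⟩ := hpre (hwin (left_mem_Icc.2 (by linarith))).2
  obtain ⟨t', ht', hφt'⟩ := hpre (hwin (right_mem_Icc.2 (by linarith))).2
  have htt' : uIcc t t' ⊆ Icc B.a B.b := uIcc_subset_Icc ht ht'
  have himage : φ '' uIcc t t' ⊆ uIcc (φ t) (φ t') :=
    ((B.continuousOn_lift hg).mono htt').image_uIcc_subset_of_injOn
      ((B.injOn_lift hg hlam).mono htt')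
  rw [hφt, hφt', uIcc_of_le (show w ≤ w + r by linarith)] at himage
  obtain ⟨B', hB'⟩ : ∃ B' : Branch f c m J, B'.length = |φ t' - φ t| :=
    B.exists_next_of_image_uIcc_subset_cell hc hg hlam ht ht'
      (fun h => by rw [h, hφt'] at hφt; linarith) hj fun _ hx => (hwin (himage hx)).1
  exact ⟨B', by rw [hB', hφt, hφt', add_sub_cancel_left, abs_of_pos hr]⟩

theorem Ico_subset_image_of_cell_subset (hc : IsIntervalPartition c m)
    (hg : IsExpandingLift f c m lam g) {N : ℤ} {j : ℕ} (hj : j < m)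
    (hcell : cell c N j ⊆ uIoo (B.lift g B.a) (B.lift g B.b)) :
    Ico (c j) (c (j + 1)) ⊆ f^[B.s + 1] '' Ico B.a B.b := by
  intro y hy
  have hNy : N + y ∈ cell c N j := ⟨by linarith [hy.1], by linarith [hy.2]⟩
  obtain ⟨t, ht, hφt⟩ :=
    uIoo_subset_image_Ico B.lt.le (B.continuousOn_lift hg) (hcell hNy)
  refine ⟨t, ht, ?_⟩
  rw [B.iterate_succ_eqOn hg ht, Function.comp_apply, hφt, fract_eq_of_mem_cell hc hj hNy]
  ring

theorem covers_or_exists_longer (hc : IsIntervalPartition c m)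
    (hg : IsExpandingLift f c m lam g) (hlam : 2 < lam) :
    (∃ j < m, Ico (c j) (c (j + 1)) ⊆ f^[B.s + 1] '' Ico B.a B.b) ∨
      ∃ B' : Branch f c m J, (lam + 2) / 4 * B.length ≤ B'.length := by
  set φ := B.lift g
  have hstretch : lam * B.length ≤ |φ B.b - φ B.a| :=
    B.mul_abs_sub_le_abs_lift_sub hg (left_mem_Icc.2 B.lt.le) (right_mem_Icc.2 B.lt.le)
  have hwidth : φ B.a ⊔ φ B.b - φ B.a ⊓ φ B.b = |φ B.b - φ B.a| := by
    rw [abs_sub_comm]; exact max_sub_min_eq_abs' _ _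
  have hlen := B.length_pos
  have hpq : φ B.a ⊓ φ B.b < φ B.a ⊔ φ B.b := by nlinarith
  rcases exists_cell_subset_Ioo_or_Ico_subset_cell hc hpq with
    ⟨N, j, hj, hcell⟩ | ⟨N, j, hj, w, hw⟩
  · exact Or.inl ⟨j, hj, B.Ico_subset_image_of_cell_subset hc hg hj hcell⟩
  -- `r` lies strictly between `B.length` and half the stretched width, so the closed window
  -- `[w, w + r]` stays inside the half-open cell.
  set r := (lam + 2) / 4 * B.length with hr_def
  have hrw : r < (φ B.a ⊔ φ B.b - φ B.a ⊓ φ B.b) / 2 := by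
    have := mul_pos (sub_pos.2 hlam) hlen
    rw [hwidth]
    linarith
  obtain ⟨B', hB'⟩ := B.exists_next_of_Icc_subset_cell hc hg (by linarith) hj
    (by positivity : 0 < r) fun x hx => hw ⟨hx.1, by linarith [hx.2]⟩
  exact Or.inr ⟨B', hB'.ge⟩

end Branch

theorem Branch.exists_covering (B : Branch f c m J) (hc : IsIntervalPartition c m)
    (hg : IsExpandingLift f c m lam g) (hlam : 2 < lam) :
    ∃ B' : Branch f c m J, ∃ j < m, Ico (c j) (c (j + 1)) ⊆ f^[B'.s + 1] '' Ico B'.a B'.b := by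
  have hρ : 1 < (lam + 2) / 4 := by linarith
  suffices h : ∀ n : ℕ, ∀ C : Branch f c m J, 1 < ((lam + 2) / 4) ^ n * C.length →
      ∃ B' : Branch f c m J, ∃ j < m, Ico (c j) (c (j + 1)) ⊆ f^[B'.s + 1] '' Ico B'.a B'.b by
    obtain ⟨n, hn⟩ := pow_unbounded_of_one_lt B.length⁻¹ hρ
    exact h n B ((inv_lt_iff_one_lt_mul₀ B.length_pos).1 hn)
  intro n
  induction n with
  | zero =>
    intro C hC
    rw [pow_zero, one_mul] at hC
    exact absurd hC (C.length_lt_one hc).not_gt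
  | succ n ih =>
    intro C hC
    rcases C.covers_or_exists_longer hc hg hlam with hcover | ⟨C', hC'⟩
    · exact ⟨C, hcover⟩
    · refine ih C' (hC.trans_le ?_)
      rw [pow_succ, mul_assoc]
      exact mul_le_mul_of_nonneg_left hC' (by positivity)

theorem nonempty_branch_Ico (hc : IsIntervalPartition c m) {a b : ℝ} (hab : a < b)
    (ha : a ∈ Ico 0 1) : Nonempty (Branch f c m (Ico a b)) := by
  obtain ⟨j, hj, haj⟩ := hc.exists_mem_Ico ha
  obtain ⟨b', hab', hb'⟩ := exists_between (lt_min hab haj.2)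
  exact ⟨{ s := 0, a := a, b := b', lt := hab'
           Ico_subset := Ico_subset_Ico_right (hb'.le.trans (min_le_left _ _))
           itinerary := fun k hk => absurd hk k.not_lt_zero
           ψ := id
           eqOn := fun _ _ => rfl
           continuousOn := continuousOn_id
           injOn := injOn_id _
           i := j
           i_lt := hj
           mapsTo := fun x hx =>
             ⟨haj.1.trans hx.1, hx.2.trans_lt (hb'.trans_le (min_le_right _ _))⟩ }⟩

end PiecewiseExpanding

theorem interval_overflows_partition_element_general
    (f : ℝ → ℝ)
    (m : ℕ) (c : ℕ → ℝ)
    (hc0 : c 0 = 0) (hcm : c m = 1) (hcmono : ∀ i < m, c i < c (i + 1))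
    (lam : ℝ) (hlam : 2 < lam)
    (g : ℕ → ℝ → ℝ)
    (hpiece : ∀ i < m,
      ContDiffOn ℝ 2 (g i) (Set.Icc (c i) (c (i + 1))) ∧
      (∀ x ∈ Set.Ico (c i) (c (i + 1)), f x = Int.fract (g i x)) ∧
      (∀ x ∈ Set.Icc (c i) (c (i + 1)), lam ≤ |derivWithin (g i) (Set.Icc (c i) (c (i + 1))) x|))
    (J : Set ℝ) (hJsub : J ⊆ Set.Ico (0 : ℝ) 1)
    (hJ : ∃ a b : ℝ, a < b ∧ J = Set.Ico a b) :
    ∃ s : ℕ, 0 < s ∧ ∃ Js : Set ℝ, Js ⊆ J ∧ (∃ a b : ℝ, a < b ∧ Js = Set.Ico a b) ∧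
      (∀ k < s, ∃ i < m, f^[k] '' Js ⊆ Set.Ico (c i) (c (i + 1))) ∧
      (∃ i < m, Set.Ico (c i) (c (i + 1)) ⊆ f^[s] '' Js) := by
  obtain ⟨a, b, hab, rfl⟩ := hJ
  have hc : PiecewiseExpanding.IsIntervalPartition c m := ⟨hc0, hcm, hcmono⟩
  have hg : PiecewiseExpanding.IsExpandingLift f c m lam g :=
    ⟨fun i hi => (hpiece i hi).1.continuousOn, fun i hi => (hpiece i hi).2.1,
      fun i hi _ hx _ hy => mul_abs_sub_le_abs_sub_of_le_abs_derivWithin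
        ((hpiece i hi).1.differentiableOn (by norm_num)) (hpiece i hi).2.2 hx hy⟩
  obtain ⟨B⟩ := PiecewiseExpanding.nonempty_branch_Ico (f := f) hc hab (hJsub (left_mem_Ico.2 hab))
  obtain ⟨B', j, hj, hcover⟩ := B.exists_covering hc hg hlam
  exact ⟨B'.s + 1, B'.s.succ_pos, Ico B'.a B'.b, B'.Ico_subset, ⟨B'.a, B'.b, B'.lt, rfl⟩,
    B'.itinerary_succ, j, hj, hcover⟩

/-- For a piecewise `C²` expanding circle map (circle modeled as
`[0,1)` with `f` expressed piecewise as `Int.fract ∘ g i` for `C²` extensions `g i`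
with `|g i '| ≥ λ > 2`), every nondegenerate interval `J` contains a subinterval `Jₛ`
on which some iterate `f^[s]` is smooth (each intermediate image lies in a single
partition element) and whose image under `f^[s]` contains a full partition element. -/
theorem interval_overflows_partition_element
    (f : ℝ → ℝ) (hf : Set.MapsTo f (Set.Ico (0 : ℝ) 1) (Set.Ico (0 : ℝ) 1))
    (m : ℕ) (hm : 0 < m) (c : ℕ → ℝ)
    (hc0 : c 0 = 0) (hcm : c m = 1) (hcmono : ∀ i < m, c i < c (i + 1))
    (lam : ℝ) (hlam : 2 < lam)
    (g : ℕ → ℝ → ℝ)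
    (hpiece : ∀ i < m,
      ContDiffOn ℝ 2 (g i) (Set.Icc (c i) (c (i + 1))) ∧
      (∀ x ∈ Set.Ico (c i) (c (i + 1)), f x = Int.fract (g i x)) ∧
      (∀ x ∈ Set.Icc (c i) (c (i + 1)), lam ≤ |derivWithin (g i) (Set.Icc (c i) (c (i + 1))) x|))
    (J : Set ℝ) (hJsub : J ⊆ Set.Ico (0 : ℝ) 1)
    (hJ : ∃ a b : ℝ, a < b ∧ J = Set.Ico a b) :
    ∃ s : ℕ, 0 < s ∧ ∃ Js : Set ℝ, Js ⊆ J ∧ (∃ a b : ℝ, a < b ∧ Js = Set.Ico a b) ∧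
      (∀ k < s, ∃ i < m, f^[k] '' Js ⊆ Set.Ico (c i) (c (i + 1))) ∧
      (∃ i < m, Set.Ico (c i) (c (i + 1)) ⊆ f^[s] '' Js) :=
  interval_overflows_partition_element_general f m c hc0 hcm hcmono lam hlam g hpiece J hJsub hJ
end

section
/- Let $\varphi : M \to (0,\infty)$ be a function on a compact connected metric space $M$ with $\int \varphi\,dm = 1$ for a finite Borel measure $m$ with full support, and suppose $|\varphi(x)/\varphi(y) - 1| \le L\,d(x,y)$ whenever $d(x,y) < \varepsilon$. Then there exists $\kappa > 0$, depending only on $L$, $\varepsilon$, $m$, and the metric structure of $M$ (not on $\varphi$), such that $\varphi \ge \kappa$ everywhere on $M$. -/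
/-!
Chaining the regularity condition along a path of `ε`-steps loses at most a factor `1 - L ε`
per step. Since `M` is connected, the iterated `ε`-thickenings of a point exhaust `M`, and by
compactness a fixed number `N` of them already does, so any two values of `φ` are within a factor
`(1 - L ε) ^ (2 N)` of each other. As `φ` has average `1 / m(M)`, it is somewhere at least that
large, hence everywhere at least `(1 - L ε) ^ (2 N) / m(M)`.
-/

open MeasureTheory Metric Set

section Thickening

variable {X : Type*} [PseudoMetricSpace X] {δ : ℝ}

theorem Metric.isClopen_of_thickening_subset (hδ : 0 < δ) {E : Set X}
    (h : thickening δ E ⊆ E) : IsClopen E := by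
  have hE : thickening δ E = E := h.antisymm (self_subset_thickening hδ E)
  refine ⟨isClosed_of_closure_subset ?_, hE ▸ isOpen_thickening⟩
  exact (closure_subset_thickening hδ E).trans h

theorem Metric.monotone_iterate_thickening (hδ : 0 < δ) (E : Set X) :
    Monotone fun n ↦ (thickening δ)^[n] E :=
  monotone_nat_of_le_succ fun n ↦ by
    rw [Function.iterate_succ_apply']
    exact self_subset_thickening hδ _

theorem Metric.iUnion_iterate_thickening_eq_univ [ConnectedSpace X] (hδ : 0 < δ)
    {E : Set X} (hE : E.Nonempty) : ⋃ n, (thickening δ)^[n] E = univ := by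
  refine IsClopen.eq_univ (isClopen_of_thickening_subset hδ ?_) ?_
  · rw [thickening_iUnion]
    exact iUnion_subset fun n ↦ by
      rw [← Function.iterate_succ_apply' (thickening δ)]
      exact subset_iUnion (fun n ↦ (thickening δ)^[n] E) (n + 1)
  · exact hE.mono (subset_iUnion (fun n ↦ (thickening δ)^[n] E) 0)

theorem Metric.exists_iterate_thickening_eq_univ [CompactSpace X] [ConnectedSpace X]
    (hδ : 0 < δ) {E : Set X} (hE : E.Nonempty) : ∃ N, (thickening δ)^[N] E = univ := by
  have hcover : univ ⊆ ⋃ n, (thickening δ)^[n + 1] E := by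
    rw [← iUnion_iterate_thickening_eq_univ hδ hE]
    exact iUnion_mono fun n ↦ monotone_iterate_thickening hδ E n.le_succ
  obtain ⟨N, hN⟩ := isCompact_univ.elim_directed_cover _
    (fun n ↦ by rw [Function.iterate_succ_apply']; exact isOpen_thickening) hcover
    ((monotone_iterate_thickening hδ E).comp fun _ _ ↦ Nat.succ_le_succ).directed_le
  exact ⟨N + 1, univ_subset_iff.mp hN⟩

/-- The step condition is symmetric in its two points, so both comparisons propagate along
`ε`-chains together. -/
theorem pow_mul_le_of_mem_iterate_thickening {f : X → ℝ} {c : ℝ} (hc : 0 ≤ c)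
    (hstep : ∀ x y, dist x y < δ → c * f y ≤ f x) {z : X} :
    ∀ {n : ℕ} {x : X}, x ∈ (thickening δ)^[n] {z} → c ^ n * f z ≤ f x ∧ c ^ n * f x ≤ f z
  | 0, x, hx => by
    rw [Function.iterate_zero_apply, mem_singleton_iff] at hx
    simp [hx]
  | n + 1, x, hx => by
    rw [Function.iterate_succ_apply', mem_thickening_iff] at hx
    obtain ⟨w, hw, hxw⟩ := hx
    obtain ⟨hzw, hwz⟩ := pow_mul_le_of_mem_iterate_thickening hc hstep hw
    constructor
    · calc c ^ (n + 1) * f z = c * (c ^ n * f z) := by ring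
        _ ≤ c * f w := mul_le_mul_of_nonneg_left hzw hc
        _ ≤ f x := hstep x w hxw
    · calc c ^ (n + 1) * f x = c ^ n * (c * f x) := by ring
        _ ≤ c ^ n * f w := mul_le_mul_of_nonneg_left (hstep w x (by rwa [dist_comm]))
            (pow_nonneg hc n)
        _ ≤ f z := hwz

end Thickening

theorem one_sub_mul_le_of_abs_div_sub_one_le {a b t : ℝ} (hb : 0 < b) (h : |a / b - 1| ≤ t) :
    (1 - t) * b ≤ a := by
  have := (abs_le.mp h).1
  rw [← le_div_iff₀ hb]
  linarith

theorem uniform_density_lower_bound_general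
    {M : Type*} [MetricSpace M] [CompactSpace M] [ConnectedSpace M]
    [MeasurableSpace M]
    (m : Measure M) [IsFiniteMeasure m] (hm : m ≠ 0)
    (L ε : ℝ) (hL : 0 < L) (hε : 0 < ε) (hLε : L * ε < 1) :
    ∃ κ : ℝ, 0 < κ ∧
      ∀ φ : M → ℝ,
        (∀ x, 0 < φ x) →
        Integrable φ m →
        (∫ x, φ x ∂m) = 1 →
        (∀ x y, dist x y < ε → |φ x / φ y - 1| ≤ L * dist x y) →
        ∀ x, κ ≤ φ x := by
  obtain ⟨x₀⟩ : Nonempty M := inferInstance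
  obtain ⟨N, hN⟩ := exists_iterate_thickening_eq_univ hε (singleton_nonempty x₀)
  set c := 1 - L * ε
  have hc : 0 < c := by linarith
  have : NeZero m := ⟨hm⟩
  have hmass : 0 < m.real univ := measureReal_univ_pos
  refine ⟨c ^ N * c ^ N / m.real univ, by positivity, fun φ hφ hint hnorm hreg x ↦ ?_⟩
  have hstep (y z : M) (hyz : dist y z < ε) : c * φ z ≤ φ y :=
    calc c * φ z ≤ (1 - L * dist y z) * φ z :=
          mul_le_mul_of_nonneg_right (by unfold c; gcongr) (hφ z).le
      _ ≤ φ y := one_sub_mul_le_of_abs_div_sub_one_le (hφ z) (hreg y z hyz)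
  obtain ⟨y, hy⟩ := exists_average_le hm hint
  rw [average_eq, hnorm, smul_eq_mul, mul_one] at hy
  have hx₀x := (pow_mul_le_of_mem_iterate_thickening hc.le hstep (hN ▸ mem_univ x)).1
  have hyx₀ := (pow_mul_le_of_mem_iterate_thickening hc.le hstep (hN ▸ mem_univ y)).2
  calc c ^ N * c ^ N / m.real univ = c ^ N * (c ^ N * (m.real univ)⁻¹) := by ring
    _ ≤ c ^ N * (c ^ N * φ y) := by gcongr
    _ ≤ c ^ N * φ x₀ := by gcongr
    _ ≤ φ x := hx₀x

/-- On a compact connected metric space with a finite fully supported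
Borel measure, probability densities in the regularity class
`|φ x / φ y - 1| ≤ L d(x,y)` for `d(x,y) < ε` (with `L ε < 1`) admit a uniform
positive lower bound `κ` depending only on `L`, `ε`, `m`, and the space, not on
`φ`. -/
theorem uniform_density_lower_bound
    {M : Type*} [MetricSpace M] [CompactSpace M] [ConnectedSpace M] [Nonempty M]
    [MeasurableSpace M] [BorelSpace M]
    (m : Measure M) [IsFiniteMeasure m] (hm : m ≠ 0) [m.IsOpenPosMeasure]
    (L ε : ℝ) (hL : 0 < L) (hε : 0 < ε) (hLε : L * ε < 1) :
    ∃ κ : ℝ, 0 < κ ∧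
      ∀ φ : M → ℝ,
        (∀ x, 0 < φ x) →
        Integrable φ m →
        (∫ x, φ x ∂m) = 1 →
        (∀ x y, dist x y < ε → |φ x / φ y - 1| ≤ L * dist x y) →
        ∀ x, κ ≤ φ x :=
  uniform_density_lower_bound_general m hm L ε hL hε hLε
end
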